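/- arXiv:2405.14569 — 2 statements merged into one kernel-verified Lean document; each statement's English description precedes it below -/
import Mathlib

section
/- Let b, d1, M ≥ 1 and set n = b·d1. For each m ∈ {0,…,M−1}, let W_m ∈ ℤ^{b×b} be a circulant matrix with first column w_m ∈ ℤ^b (W_m[i,j] = w_m[(i−j) mod b]), and let X_m ∈ ℤ^{b×d1}. Define ŵ_m, x̂_m ∈ ℂ^n by ŵ_m[i·d1] = w_m[i] for i ∈ {0,…,b−1} with all other entries 0, and x̂_m[i·d1 + j] = X_m[i,j] for i ∈ {0,…,b−1}, j ∈ {0,…,d1−1}. Let ŷ_m = ŵ_m ⋆ x̂_m be the length-n cyclic convolution. Then: (a) for every m ∈ {0,…,M−1} and every k ∈ {0,…,n−1}, DFT(ŵ_m)[k] · DFT(x̂_m)[k] = DFT(ŷ_m)[k] — that is, the entrywise product of the concatenated vectors (DFT(ŵ_0) | … | DFT(ŵ_{M−1})) and (DFT(x̂_0) | … | DFT(x̂_{M−1})) in ℂ^{Mn} equals the concatenated vector (DFT(ŷ_0) | … | DFT(ŷ_{M−1})); and (b) for every m, (W_m · X_m)[i,j] = ŷ_m[i·d1 + j] for all i ∈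 {0,…,b−1}, j ∈ {0,…,d1−1}. -/
/-!
Part (a) is the convolution theorem for the DFT: `ω = exp(-2πik/n)` satisfies `ωⁿ = 1`, so
`t ↦ ωᵗ` only depends on `t mod n`, and substituting `t ↦ t - s (mod n)` turns
`Σₜ (ŵ ⋆ x̂)[t] ωᵗ` into `(Σᵣ ŵ[r] ωʳ) · (Σₛ x̂[s] ωˢ)`.
Part (b): `ŵ` is supported on multiples of `d1`, so in `(ŵ ⋆ x̂)[i·d1 + j]` only the terms
`s = k·d1 + j` survive, and they contribute `w[(i - k) mod b] · X[k, j] = W[i, k] · X[k, j]`.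
-/

open Finset

theorem Finset.sum_range_comp_add_mod {M : Type*} [AddCommMonoid M] (φ : ℕ → M) (n c : ℕ) :
    ∑ t ∈ range n, φ ((t + c) % n) = ∑ t ∈ range n, φ t := by
  rcases Nat.eq_zero_or_pos n with rfl | hn
  · simp
  have : NeZero n := ⟨hn.ne'⟩
  rw [← Fin.sum_univ_eq_sum_range (fun t => φ ((t + c) % n)), ← Fin.sum_univ_eq_sum_range]
  calc ∑ i : Fin n, φ ((i + c) % n)
      = ∑ i : Fin n, φ ↑(Equiv.addRight (Fin.ofNat n c) i) := by simp [Fin.val_add]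
    _ = ∑ i : Fin n, φ i := Equiv.sum_comp (Equiv.addRight (Fin.ofNat n c)) (fun i => φ i)

theorem sum_cyclicConv_mul_pow {R : Type*} [CommSemiring R] {z : R} {n : ℕ} (hz : z ^ n = 1)
    (f g : ℕ → R) :
    ∑ t ∈ range n, (∑ s ∈ range n, f ((t + n - s) % n) * g s) * z ^ t
      = (∑ t ∈ range n, f t * z ^ t) * ∑ t ∈ range n, g t * z ^ t := by
  have shift : ∀ s ∈ range n,
      ∑ t ∈ range n, f ((t + n - s) % n) * z ^ t
        = (∑ t ∈ range n, f t * z ^ t) * z ^ s := by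
    intro s hs
    have hsn : s ≤ n := (mem_range.mp hs).le
    rw [sum_mul, ← sum_range_comp_add_mod (fun t => f t * z ^ t * z ^ s) n (n - s)]
    refine sum_congr rfl fun t _ => ?_
    rw [← Nat.add_sub_assoc hsn, mul_assoc, ← pow_eq_pow_mod _ hz, ← pow_add,
      Nat.sub_add_cancel (by omega), pow_add, hz, mul_one]
  calc ∑ t ∈ range n, (∑ s ∈ range n, f ((t + n - s) % n) * g s) * z ^ t
      = ∑ s ∈ range n, (∑ t ∈ range n, f ((t + n - s) % n) * z ^ t) * g s := by
        simp_rw [sum_mul]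
        rw [sum_comm]
        exact sum_congr rfl fun _ _ => sum_congr rfl fun _ _ => by ring
    _ = (∑ t ∈ range n, f t * z ^ t) * ∑ t ∈ range n, g t * z ^ t := by
        rw [mul_sum]
        exact sum_congr rfl fun s hs => by rw [shift s hs]; ring

theorem Complex.exp_neg_two_pi_I_mul_mul_div (j k n : ℕ) :
    Complex.exp (-2 * Real.pi * Complex.I * j * k / n)
      = Complex.exp (-2 * Real.pi * Complex.I * k / n) ^ j := by
  rw [← Complex.exp_nat_mul]
  ring_nf

theorem Complex.exp_neg_two_pi_I_mul_div_pow_self (k n : ℕ) :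
    Complex.exp (-2 * Real.pi * Complex.I * k / n) ^ n = 1 := by
  rcases eq_or_ne n 0 with rfl | hn
  · simp
  rw [← Complex.exp_nat_mul]
  have : (n : ℂ) * (-2 * Real.pi * Complex.I * k / n)
      = (-(k : ℤ) : ℤ) * (2 * Real.pi * Complex.I) := by
    push_cast
    field_simp
  rw [this, Complex.exp_int_mul_two_pi_mul_I]

theorem Finset.sum_range_mul_eq_sum_sum {M : Type*} [AddCommMonoid M] (f : ℕ → M) (b d : ℕ) :
    ∑ s ∈ range (b * d), f s = ∑ k ∈ range b, ∑ l ∈ range d, f (k * d + l) := by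
  induction b with
  | zero => simp
  | succ b ih => rw [sum_range_succ, ← ih, Nat.succ_mul, sum_range_add]

theorem Nat.add_mul_sub_add_mul_mod_mul {b d i j k : ℕ} (hk : k < b) :
    (i * d + j + b * d - (k * d + j)) % (b * d) = (i + b - k) % b * d := by
  have : i * d + j + b * d - (k * d + j) = (i + b - k) * d := by
    rw [Nat.sub_mul, add_mul]
    have : k * d ≤ b * d := Nat.mul_le_mul_right d hk.le
    omega
  rw [this, Nat.mul_mod_mul_right]

theorem Nat.eq_of_dvd_add_mul_sub_add_mul_mod {b d i j k l : ℕ} (hk : k < b) (hj : j < d)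
    (hl : l < d) (hdvd : d ∣ (i * d + j + b * d - (k * d + l)) % (b * d)) : l = j := by
  have hkl : k * d + l < b * d := by
    calc k * d + l < (k + 1) * d := by rw [add_mul, one_mul]; omega
      _ ≤ b * d := Nat.mul_le_mul_right d hk
  rw [Nat.dvd_mod_iff (dvd_mul_left d b)] at hdvd
  have hsum : i * d + j + b * d - (k * d + l) + l = j + (i + b - k) * d := by
    rw [Nat.sub_mul, add_mul]
    have : k * d ≤ b * d := Nat.mul_le_mul_right d hk.le
    omega
  have hmod := Nat.add_mod (i * d + j + b * d - (k * d + l)) l d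
  rw [hsum, Nat.add_mul_mod_self_right, Nat.mod_eq_zero_of_dvd hdvd, zero_add, Nat.mod_mod,
    Nat.mod_eq_of_lt hj, Nat.mod_eq_of_lt hl] at hmod
  exact hmod.symm

theorem sum_cyclicConv_of_dvd_support {R : Type*} [NonUnitalNonAssocSemiring R] {b d i j : ℕ}
    (hi : i < b) (hj : j < d) (f g : ℕ → R) (hf : ∀ t < b * d, ¬ d ∣ t → f t = 0) :
    ∑ s ∈ range (b * d), f ((i * d + j + b * d - s) % (b * d)) * g s
      = ∑ k ∈ range b, f ((i + b - k) % b * d) * g (k * d + j) := by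
  have hbd : 0 < b * d := Nat.mul_pos (by omega) (by omega)
  rw [sum_range_mul_eq_sum_sum]
  refine sum_congr rfl fun k hk => ?_
  have hk := mem_range.mp hk
  rw [sum_eq_single_of_mem j (mem_range.mpr hj), Nat.add_mul_sub_add_mul_mod_mul hk]
  intro l hl hlj
  rw [hf _ (Nat.mod_lt _ hbd) fun h => hlj (Nat.eq_of_dvd_add_mul_sub_add_mul_mod hk hj
    (mem_range.mp hl) h), zero_mul]

theorem cirencode_across_blocks_general
    (b d1 M : ℕ)
    (n : ℕ) (hn : n = b * d1)
    (w : ℕ → ℕ → ℤ) (W : ℕ → ℕ → ℕ → ℤ)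
    (hW : ∀ m < M, ∀ i < b, ∀ j < b, W m i j = w m ((i + b - j) % b))
    (X : ℕ → ℕ → ℕ → ℤ)
    (what xhat yhat : ℕ → ℕ → ℂ)
    (hwhat : ∀ m < M, ∀ i < b, what m (i * d1) = (w m i : ℂ))
    (hwhat0 : ∀ m < M, ∀ t < n, ¬ d1 ∣ t → what m t = 0)
    (hxhat : ∀ m < M, ∀ i < b, ∀ j < d1, xhat m (i * d1 + j) = (X m i j : ℂ))
    (hyhat : ∀ m < M, ∀ t < n,
      yhat m t = ∑ s ∈ Finset.range n, what m ((t + n - s) % n) * xhat m s)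
    (dft : (ℕ → ℂ) → ℕ → ℂ)
    (hdft : ∀ f : ℕ → ℂ, ∀ k < n, dft f k =
      ∑ j ∈ Finset.range n,
        f j * Complex.exp (-2 * Real.pi * Complex.I * (j : ℂ) * (k : ℂ) / (n : ℂ))) :
    (∀ m < M, ∀ k < n, dft (what m) k * dft (xhat m) k = dft (yhat m) k) ∧
    (∀ m < M, ∀ i < b, ∀ j < d1,
      ((∑ k ∈ Finset.range b, W m i k * X m k j : ℤ) : ℂ) = yhat m (i * d1 + j)) := by
  refine ⟨fun m hm k hk => ?_, fun m hm i hi j hj => ?_⟩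
  · simp only [hdft _ k hk, Complex.exp_neg_two_pi_I_mul_mul_div]
    rw [← sum_cyclicConv_mul_pow (Complex.exp_neg_two_pi_I_mul_div_pow_self k n)]
    exact sum_congr rfl fun t ht => by rw [hyhat m hm t (mem_range.mp ht)]
  · subst hn
    have hij : i * d1 + j < b * d1 := by nlinarith
    rw [hyhat m hm _ hij, sum_cyclicConv_of_dvd_support hi hj _ _ (hwhat0 m hm)]
    push_cast
    refine sum_congr rfl fun k hk => ?_
    have hk := mem_range.mp hk
    rw [hW m hm i hi k hk, hwhat m hm _ (Nat.mod_lt _ (by omega)), hxhat m hm k hk j hj]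

/-- **CirEncode across circulant blocks** (Theorem 2 of the paper).
For `M` circulant GEMMs `Y_m = W_m · X_m` with circulant `W_m ∈ ℤ^{b×b}` and
`X_m ∈ ℤ^{b×d1}`, encode each pair as `ŵ_m, x̂_m ∈ ℂ^n` (`n = b·d1`) as in Theorem 1
and let `ŷ_m = ŵ_m ⋆ x̂_m` be the cyclic convolution. Then
(a) entrywise, `DFT(ŵ_m)[k]·DFT(x̂_m)[k] = DFT(ŷ_m)[k]` for all `m < M`, `k < n`
(i.e. the entrywise product of the concatenated DFT vectors equals the concatenated
DFT of the outputs), and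
(b) `(W_m · X_m)[i,j] = ŷ_m[i·d1 + j]`. -/
theorem cirencode_across_blocks
    (b d1 M : ℕ) (hb : 1 ≤ b) (hd1 : 1 ≤ d1) (hM : 1 ≤ M)
    (n : ℕ) (hn : n = b * d1)
    (w : ℕ → ℕ → ℤ) (W : ℕ → ℕ → ℕ → ℤ)
    (hW : ∀ m < M, ∀ i < b, ∀ j < b, W m i j = w m ((i + b - j) % b))
    (X : ℕ → ℕ → ℕ → ℤ)
    (what xhat yhat : ℕ → ℕ → ℂ)
    (hwhat : ∀ m < M, ∀ i < b, what m (i * d1) = (w m i : ℂ))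
    (hwhat0 : ∀ m < M, ∀ t < n, ¬ d1 ∣ t → what m t = 0)
    (hxhat : ∀ m < M, ∀ i < b, ∀ j < d1, xhat m (i * d1 + j) = (X m i j : ℂ))
    (hyhat : ∀ m < M, ∀ t < n,
      yhat m t = ∑ s ∈ Finset.range n, what m ((t + n - s) % n) * xhat m s)
    (dft : (ℕ → ℂ) → ℕ → ℂ)
    (hdft : ∀ f : ℕ → ℂ, ∀ k < n, dft f k =
      ∑ j ∈ Finset.range n,
        f j * Complex.exp (-2 * Real.pi * Complex.I * (j : ℂ) * (k : ℂ) / (n : ℂ))) :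
    (∀ m < M, ∀ k < n, dft (what m) k * dft (xhat m) k = dft (yhat m) k) ∧
    (∀ m < M, ∀ i < b, ∀ j < d1,
      ((∑ k ∈ Finset.range b, W m i k * X m k j : ℤ) : ℂ) = yhat m (i * d1 + j)) :=
  cirencode_across_blocks_general b d1 M n hn w W hW X what xhat yhat hwhat hwhat0 hxhat hyhat dft
    hdft
end

section
/- Let b ≥ 1 and let W, G ∈ ℝ^{b×b} be such that for every d ∈ {0,…,b−1}, S_d := Σ_{i=0}^{b−1} G[i,(i+d) mod b]² > 0. For a circulant matrix C ∈ ℝ^{b×b} define the weighted objective F(C) = Σ_{i=0}^{b−1} Σ_{j=0}^{b−1} G[i,j]²·(C[i,j] − W[i,j])². Then the unique minimizer of F over all circulant b×b matrices is the circulant matrix C* whose d-th generalized diagonal has the constant value t_d = ( Σ_{i=0}^{b−1} G[i,(i+d) mod b]²·W[i,(i+d) mod b] ) / S_d, i.e., C*[i,(i+d) mod b] = t_d for all i,d; that is, F(C*) ≤ F(C) for every circulant C, with equality if and only if C = C*. -/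
/-!
Summing along the generalized diagonals `j = (i + d) % b` splits `F(C)` into independent
one-variable weighted least-squares problems, one per diagonal, since a circulant `C` is
constant, say `t' d`, on the `d`-th diagonal. Completing the square,
`Σ_i g_i (x - w_i)² = Σ_i g_i (x̄ - w_i)² + (Σ_i g_i) (x - x̄)²` with `x̄` the `g`-weighted
mean of the `w_i`, gives `F(C) = F(C*) + Σ_d S_d (t' d - t_d)²`, and `S_d > 0` forces
equality only for `t' = t`.
-/

open Finset

section ModArith

variable {b i j d : ℕ}

theorem add_sub_mod_add_mod (hi : i < b) (hj : j < b) : (i + (j + b - i) % b) % b = j := by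
  conv_rhs => rw [← Nat.mod_eq_of_lt hj]
  rw [← ZMod.natCast_eq_natCast_iff']
  push_cast [ZMod.natCast_mod, Nat.cast_sub (by omega : i ≤ j + b), ZMod.natCast_self]
  ring

theorem add_sub_add_mod_mod (hd : d < b) : (i + b - (i + d) % b) % b = (b - d) % b := by
  have hle : (i + d) % b ≤ i + b := (Nat.mod_lt _ (by omega)).le.trans (by omega)
  rw [← ZMod.natCast_eq_natCast_iff']
  push_cast [Nat.cast_sub hd.le, Nat.cast_sub hle, ZMod.natCast_mod, ZMod.natCast_self]
  ring

theorem sub_sub_mod_mod (hd : d < b) : (b - (b - d) % b) % b = d := by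
  conv_rhs => rw [← Nat.mod_eq_of_lt hd]
  rw [← ZMod.natCast_eq_natCast_iff']
  push_cast [Nat.cast_sub (Nat.mod_lt _ (by omega : 0 < b)).le, Nat.cast_sub hd.le,
    ZMod.natCast_mod, ZMod.natCast_self]
  ring

theorem forall_lt_forall_lt_iff_add_mod {P : ℕ → ℕ → Prop} :
    (∀ i < b, ∀ j < b, P i j) ↔ ∀ i < b, ∀ d < b, P i ((i + d) % b) := by
  refine ⟨fun h i hi d _ => h i hi _ (Nat.mod_lt _ (by omega)), fun h i hi j hj => ?_⟩
  simpa only [add_sub_mod_add_mod hi hj] using h i hi ((j + b - i) % b) (Nat.mod_lt _ (by omega))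

end ModArith

theorem sum_range_add_mod {M : Type*} [AddCommMonoid M] (b i : ℕ) (f : ℕ → M) :
    ∑ d ∈ range b, f ((i + d) % b) = ∑ j ∈ range b, f j := by
  rcases Nat.eq_zero_or_pos b with rfl | hb
  · simp
  have : NeZero b := ⟨hb.ne'⟩
  rw [← Fin.sum_univ_eq_sum_range (fun d => f ((i + d) % b)), ← Fin.sum_univ_eq_sum_range f]
  exact Fintype.sum_equiv (Equiv.addLeft (Fin.ofNat b i)) _ _ fun d => by simp [Fin.val_add]

theorem sum_range_sum_range_eq_sum_diag {M : Type*} [AddCommMonoid M] (b : ℕ)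
    (f : ℕ → ℕ → M) :
    ∑ i ∈ range b, ∑ j ∈ range b, f i j =
      ∑ d ∈ range b, ∑ i ∈ range b, f i ((i + d) % b) := by
  rw [eq_comm, sum_comm]
  exact sum_congr rfl fun i _ => sum_range_add_mod b i (f i)

theorem sum_mul_sub_sq_eq_weighted_mean_add {ι : Type*} (s : Finset ι) (g w : ι → ℝ)
    (hg : ∑ i ∈ s, g i ≠ 0) (x : ℝ) :
    ∑ i ∈ s, g i * (x - w i) ^ 2 =
      ∑ i ∈ s, g i * ((∑ i ∈ s, g i * w i) / (∑ i ∈ s, g i) - w i) ^ 2 +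
        (∑ i ∈ s, g i) * (x - (∑ i ∈ s, g i * w i) / (∑ i ∈ s, g i)) ^ 2 := by
  set m := (∑ i ∈ s, g i * w i) / ∑ i ∈ s, g i
  have hcentered : ∑ i ∈ s, g i * (m - w i) = 0 := by
    simp only [mul_sub, sum_sub_distrib, ← sum_mul, m, mul_div_cancel₀ _ hg, sub_self]
  have hexpand : ∀ i ∈ s, g i * (x - w i) ^ 2 =
      g i * (m - w i) ^ 2 + g i * (x - m) ^ 2 + 2 * (x - m) * (g i * (m - w i)) :=
    fun i _ => by ring
  rw [sum_congr rfl hexpand, sum_add_distrib, sum_add_distrib, ← mul_sum, hcentered, ← sum_mul]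
  ring

section Circulant

variable {α : Type*} {b : ℕ}

/-- `(i + b - j) % b` is `(i - j) mod b` for `j < b`, avoiding truncated subtraction. -/
def IsCirculant (b : ℕ) (C : ℕ → ℕ → α) : Prop :=
  ∃ c : ℕ → α, ∀ i < b, ∀ j < b, C i j = c ((i + b - j) % b)

theorem isCirculant_iff_exists_diag {C : ℕ → ℕ → α} :
    IsCirculant b C ↔ ∃ t : ℕ → α, ∀ i < b, ∀ d < b, C i ((i + d) % b) = t d := by
  constructor
  · rintro ⟨c, hc⟩
    refine ⟨fun d => c ((b - d) % b), fun i hi d hd => ?_⟩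
    rw [hc i hi _ (Nat.mod_lt _ (by omega)), add_sub_add_mod_mod hd]
  · rintro ⟨t, ht⟩
    refine ⟨fun e => t ((b - e) % b), forall_lt_forall_lt_iff_add_mod.2 fun i hi d hd => ?_⟩
    rw [ht i hi d hd, add_sub_add_mod_mod hd]
    exact congrArg t (sub_sub_mod_mod hd).symm

end Circulant

theorem sum_weighted_sq_sub_eq_sum_diag (b : ℕ) (W G C : ℕ → ℕ → ℝ) (t : ℕ → ℝ)
    (hC : ∀ i < b, ∀ d < b, C i ((i + d) % b) = t d) :
    ∑ i ∈ range b, ∑ j ∈ range b, G i j ^ 2 * (C i j - W i j) ^ 2 =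
      ∑ d ∈ range b, ∑ i ∈ range b,
        G i ((i + d) % b) ^ 2 * (t d - W i ((i + d) % b)) ^ 2 := by
  rw [sum_range_sum_range_eq_sum_diag]
  refine sum_congr rfl fun d hd => sum_congr rfl fun i hi => ?_
  rw [hC i (mem_range.1 hi) d (mem_range.1 hd)]

theorem loss_aware_circulant_init_general
    (b : ℕ) (W G : ℕ → ℕ → ℝ)
    (hpos : ∀ d < b, 0 < ∑ i ∈ Finset.range b, (G i ((i + d) % b)) ^ 2)
    (Cstar : ℕ → ℕ → ℝ)
    (hCstar : ∀ i < b, ∀ d < b,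
      Cstar i ((i + d) % b) =
        (∑ i' ∈ Finset.range b, (G i' ((i' + d) % b)) ^ 2 * W i' ((i' + d) % b)) /
          (∑ i' ∈ Finset.range b, (G i' ((i' + d) % b)) ^ 2))
    (F : (ℕ → ℕ → ℝ) → ℝ)
    (hF : ∀ C : ℕ → ℕ → ℝ,
      F C = ∑ i ∈ Finset.range b, ∑ j ∈ Finset.range b,
        (G i j) ^ 2 * (C i j - W i j) ^ 2) :
    (∃ c : ℕ → ℝ, ∀ i < b, ∀ j < b, Cstar i j = c ((i + b - j) % b)) ∧
    (∀ C : ℕ → ℕ → ℝ,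
      (∃ c : ℕ → ℝ, ∀ i < b, ∀ j < b, C i j = c ((i + b - j) % b)) →
      F Cstar ≤ F C ∧ (F Cstar = F C ↔ ∀ i < b, ∀ j < b, C i j = Cstar i j)) := by
  set S : ℕ → ℝ := fun d => ∑ i ∈ range b, G i ((i + d) % b) ^ 2
  set t : ℕ → ℝ := fun d =>
    (∑ i ∈ range b, G i ((i + d) % b) ^ 2 * W i ((i + d) % b)) / S d
  refine ⟨isCirculant_iff_exists_diag.2 ⟨t, hCstar⟩, fun C hC => ?_⟩
  obtain ⟨t', hC'⟩ := isCirculant_iff_exists_diag.1 hC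
  have hgap : F C = F Cstar + ∑ d ∈ range b, S d * (t' d - t d) ^ 2 := by
    rw [hF, hF, sum_weighted_sq_sub_eq_sum_diag b W G C t' hC',
      sum_weighted_sq_sub_eq_sum_diag b W G Cstar t hCstar, ← sum_add_distrib]
    exact sum_congr rfl fun d hd =>
      sum_mul_sub_sq_eq_weighted_mean_add _ _ _ (hpos d (mem_range.1 hd)).ne' _
  have hterm : ∀ d ∈ range b, 0 ≤ S d * (t' d - t d) ^ 2 :=
    fun d hd => mul_nonneg (hpos d (mem_range.1 hd)).le (sq_nonneg _)
  refine ⟨hgap ▸ le_add_of_nonneg_right (sum_nonneg hterm), fun hmin => ?_, fun hCC => ?_⟩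
  · have hzero := (sum_eq_zero_iff_of_nonneg hterm).1 (by linarith)
    refine forall_lt_forall_lt_iff_add_mod.2 fun i hi d hd => ?_
    have := hzero d (mem_range.2 hd)
    rw [hC' i hi d hd, hCstar i hi d hd]
    simpa [(hpos d hd).ne', sub_eq_zero, S, t] using this
  · rw [hF, hF]
    exact sum_congr rfl fun i hi => sum_congr rfl fun j hj =>
      by rw [hCC i (mem_range.1 hi) j (mem_range.1 hj)]

/-- **Loss-aware initialization for circulant matrices** (Section 3.3 and
Appendix E of the paper). Minimizing the gradient-squared-weighted objective
`F(C) = Σ_{i,j<b} G[i,j]²·(C[i,j] - W[i,j])²` over circulant matrices `C` has the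
unique minimizer `C*` whose `d`-th generalized diagonal is constant equal to
`(Σ_i G[i,(i+d)%b]²·W[i,(i+d)%b]) / (Σ_i G[i,(i+d)%b]²)`. -/
theorem loss_aware_circulant_init
    (b : ℕ) (hb : 1 ≤ b) (W G : ℕ → ℕ → ℝ)
    (hpos : ∀ d < b, 0 < ∑ i ∈ Finset.range b, (G i ((i + d) % b)) ^ 2)
    (Cstar : ℕ → ℕ → ℝ)
    (hCstar : ∀ i < b, ∀ d < b,
      Cstar i ((i + d) % b) =
        (∑ i' ∈ Finset.range b, (G i' ((i' + d) % b)) ^ 2 * W i' ((i' + d) % b)) /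
          (∑ i' ∈ Finset.range b, (G i' ((i' + d) % b)) ^ 2))
    (F : (ℕ → ℕ → ℝ) → ℝ)
    (hF : ∀ C : ℕ → ℕ → ℝ,
      F C = ∑ i ∈ Finset.range b, ∑ j ∈ Finset.range b,
        (G i j) ^ 2 * (C i j - W i j) ^ 2) :
    (∃ c : ℕ → ℝ, ∀ i < b, ∀ j < b, Cstar i j = c ((i + b - j) % b)) ∧
    (∀ C : ℕ → ℕ → ℝ,
      (∃ c : ℕ → ℝ, ∀ i < b, ∀ j < b, C i j = c ((i + b - j) % b)) →
      F Cstar ≤ F C ∧ (F Cstar = F C ↔ ∀ i < b, ∀ j < b, C i j = Cstar i j)) :=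
  loss_aware_circulant_init_general b W G hpos Cstar hCstar F hF
end
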